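/- In a split graph G with degree sequence d = (d_1, ..., d_n) in nonincreasing order and m = m(d) = max{i : d_i ≥ i−1}, the set of m vertices of largest degree forms a clique and the remaining vertices form an independent set. -/

import Mathlib

open SimpleGraph Finset

/-- `s` is an independent set in `G`. -/
def IsIndepSet {α : Type*} (G : SimpleGraph α) (s : Set α) : Prop :=
  s.Pairwise fun a b => ¬ G.Adj a b

/-- `(G, A, B)` is a splitted graph: `A` an independent set and `B` a clique
partitioning the vertex set of `G`. -/
def IsSplitted {α : Type*} (G : SimpleGraph α) (A B : Set α) : Prop :=
  _root_.IsIndepSet G A ∧ G.IsClique B ∧ A ∪ B = Set.univ ∧ Disjoint A B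

/-- `G` is a split graph. -/
def IsSplitGraph {α : Type*} (G : SimpleGraph α) : Prop :=
  ∃ A B : Set α, IsSplitted G A B

/-- Tyshkevich composition `(G, A, B) ∘ H`: the disjoint union of `G` and `H`
together with all edges between the clique `B` and the vertices of `H`. -/
def comp {α β : Type*} (G : SimpleGraph α) (B : Set α) (H : SimpleGraph β) :
    SimpleGraph (α ⊕ β) where
  Adj x y :=
    match x, y with
    | Sum.inl a, Sum.inl a' => G.Adj a a'
    | Sum.inr b, Sum.inr b' => H.Adj b b'
    | Sum.inl a, Sum.inr _ => a ∈ B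
    | Sum.inr _, Sum.inl a => a ∈ B
  symm := ⟨by
    rintro (a | b) (a' | b') h
    · exact G.adj_symm h
    · exact h
    · exact h
    · exact H.adj_symm h⟩
  loopless := ⟨by
    rintro (a | b) h
    · exact G.ne_of_adj h rfl
    · exact H.ne_of_adj h rfl⟩

/-- The degree of a vertex, as the cardinality of its neighborhood. -/
noncomputable def deg {α : Type*} (G : SimpleGraph α) (v : α) : ℕ :=
  (G.neighborSet v).ncard

/-- The disjoint union of two edges. -/
def twoK2 : SimpleGraph (Fin 4) :=
  SimpleGraph.fromRel fun a b => (a.val = 0 ∧ b.val = 1) ∨ (a.val = 2 ∧ b.val = 3)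

/-- The 4-cycle. -/
def cycle4 : SimpleGraph (Fin 4) :=
  SimpleGraph.fromRel fun a b =>
    (a.val = 0 ∧ b.val = 1) ∨ (a.val = 1 ∧ b.val = 2) ∨
    (a.val = 2 ∧ b.val = 3) ∨ (a.val = 3 ∧ b.val = 0)

/-- The path on four vertices. -/
def path4 : SimpleGraph (Fin 4) :=
  SimpleGraph.fromRel fun a b =>
    (a.val = 0 ∧ b.val = 1) ∨ (a.val = 1 ∧ b.val = 2) ∨ (a.val = 2 ∧ b.val = 3)

/-- The 5-cycle. -/
def cycle5 : SimpleGraph (Fin 5) :=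
  SimpleGraph.fromRel fun a b =>
    (a.val = 0 ∧ b.val = 1) ∨ (a.val = 1 ∧ b.val = 2) ∨
    (a.val = 2 ∧ b.val = 3) ∨ (a.val = 3 ∧ b.val = 4) ∨ (a.val = 4 ∧ b.val = 0)

/-!
Take a split partition `(A, B)` with `k = |B|` maximal. Maximality means that every vertex of
`A` misses some vertex of `B`, so vertices of `A` have degree `< k` while vertices of the clique
`B` have degree `≥ k - 1`. For the sorted degree sequence this gives `d i ≥ k - 1` for `i < k`
and `d i < k` for `i ≥ k`, hence `m(d) = k`.

Let `T` be the `k` vertices of largest degree. A vertex of `B \ T` has degree `< k`, so its only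
neighbours are the rest of `B`. A vertex of `T \ B` lies in `A` and has degree `≥ k - 1`, so it is
adjacent to all of `B` but one vertex, and that vertex must be every vertex of `B \ T`. Since
`|T \ B| = |B \ T|`, both differences have at most one element, which makes `T` a clique and its
complement independent.
-/

lemma Set.ncard_sdiff_comm {α : Type*} [Finite α] {s t : Set α} (h : s.ncard = t.ncard) :
    (s \ t).ncard = (t \ s).ncard := by
  have hs := Set.ncard_inter_add_ncard_sdiff_eq_ncard s t
  have ht := Set.ncard_inter_add_ncard_sdiff_eq_ncard t s
  rw [Set.inter_comm] at ht
  omega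

lemma Equiv.setOf_exists_eq_apply {α β : Type*} (e : α ≃ β) (p : α → Prop) :
    {x | ∃ i, p i ∧ x = e i} = e '' {i | p i} :=
  Set.ext fun _ => exists_congr fun _ => and_congr_right' eq_comm

lemma Equiv.ncard_image_setOf_val_lt {n k : ℕ} {α : Type*} (e : Fin n ≃ α) (hk : k ≤ n) :
    (e '' {i : Fin n | (i : ℕ) < k}).ncard = k := by
  rw [Set.ncard_image_of_injective _ e.injective, Set.ncard_eq_toFinset_card', Set.toFinset_ofPred,
    Fin.card_filter_val_lt, min_eq_right hk]

lemma Equiv.card_filter_apply_mem {n : ℕ} {α : Type*} (e : Fin n ≃ α) (s : Set α)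
    [DecidablePred (· ∈ s)] : #{i | e i ∈ s} = s.ncard := by
  rw [← Set.ncard_coe_finset, coe_filter_univ, ← Set.preimage_ofPred_eq, Set.ofPred_mem_eq,
    Set.ncard_preimage_of_injective_subset_range e.injective (by simp)]

section DegreeSequence

variable {n : ℕ} {d : Fin n → ℕ}

lemma Antitone.le_of_lt_card (hd : Antitone d) {c : ℕ} {s : Finset (Fin n)}
    (hs : ∀ j ∈ s, c ≤ d j) {i : Fin n} (hi : (i : ℕ) < #s) : c ≤ d i := by
  obtain ⟨j, hj, hij⟩ : ∃ j ∈ s, i ≤ j := by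
    by_contra! h
    have := card_le_card fun j hj => mem_Iio.2 (h j hj)
    rw [Fin.card_Iio] at this
    omega
  exact (hs j hj).trans (hd hij)

lemma Antitone.lt_of_card_le (hd : Antitone d) {c k : ℕ} (hk : #{j | c ≤ d j} ≤ k) {i : Fin n}
    (hi : k ≤ (i : ℕ)) : d i < c := by
  by_contra! h
  have := card_le_card (s := Iic i) (t := {j | c ≤ d j})
    fun j hj => mem_filter.2 ⟨mem_univ j, h.trans (hd (mem_Iic.1 hj))⟩
  rw [Fin.card_Iic] at this
  omega

lemma sup_filter_le_eq {k : ℕ} (hkn : k ≤ n) (hhigh : ∀ i : Fin n, (i : ℕ) < k → k ≤ d i + 1)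
    (hlow : ∀ i : Fin n, k ≤ (i : ℕ) → d i < k) :
    (univ.filter fun j : Fin n => (j : ℕ) ≤ d j).sup (fun j : Fin n => (j : ℕ) + 1) = k := by
  refine le_antisymm (Finset.sup_le fun j hj => ?_) ?_
  · have := (mem_filter.1 hj).2
    have := hlow j
    omega
  · rcases Nat.eq_zero_or_pos k with rfl | hk
    · exact Nat.zero_le _
    let j : Fin n := ⟨k - 1, by omega⟩
    have hj : (j : ℕ) ≤ d j := by
      have := hhigh j (show k - 1 < k by omega)
      show k - 1 ≤ d j
      omega
    calc k = (j : ℕ) + 1 := by show k = k - 1 + 1; omega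
      _ ≤ _ := Finset.le_sup (f := fun j : Fin n => (j : ℕ) + 1) (mem_filter.2 ⟨mem_univ j, hj⟩)

end DegreeSequence

section Graph

variable {V : Type*} {G : SimpleGraph V} {A B : Set V}

lemma SimpleGraph.IsClique.diff_singleton_subset_neighborSet (hB : G.IsClique B) {b : V}
    (hb : b ∈ B) : B \ {b} ⊆ G.neighborSet b :=
  fun _ hy => hB hb hy.1 (Ne.symm hy.2)

variable [Finite V]

lemma SimpleGraph.IsClique.ncard_le_deg_add_one (hB : G.IsClique B) {b : V} (hb : b ∈ B) :
    B.ncard ≤ deg G b + 1 := by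
  rw [← Set.ncard_sdiff_singleton_add_one hb]
  exact Nat.add_le_add_right (Set.ncard_le_ncard (hB.diff_singleton_subset_neighborSet hb)) 1

lemma SimpleGraph.IsClique.neighborSet_eq_of_deg_lt (hB : G.IsClique B) {b : V} (hb : b ∈ B)
    (hdeg : deg G b < B.ncard) : G.neighborSet b = B \ {b} := by
  refine (Set.eq_of_subset_of_ncard_le (hB.diff_singleton_subset_neighborSet hb) ?_).symm
  have := Set.ncard_sdiff_singleton_add_one hb
  unfold deg at hdeg
  omega

lemma neighborSet_eq_diff_singleton_of_not_adj {a b : V} (hN : G.neighborSet a ⊆ B) (hb : b ∈ B)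
    (hab : ¬ G.Adj a b) (hdeg : B.ncard ≤ deg G a + 1) : G.neighborSet a = B \ {b} := by
  refine Set.eq_of_subset_of_ncard_le (fun y hy => ⟨hN hy, ?_⟩) ?_
  · rintro rfl
    exact hab hy
  · have := Set.ncard_sdiff_singleton_add_one hb
    unfold deg at hdeg
    omega

lemma IsSplitGraph.exists_isSplitted_forall_ncard_le (h : IsSplitGraph G) :
    ∃ A B, IsSplitted G A B ∧ ∀ A' B', IsSplitted G A' B' → B'.ncard ≤ B.ncard := by
  obtain ⟨A, B, hAB⟩ := h
  obtain ⟨⟨A, B⟩, hAB, hmax⟩ := Set.exists_max_image {p : Set V × Set V | IsSplitted G p.1 p.2}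
    (fun p => p.2.ncard) (Set.toFinite _) ⟨(A, B), hAB⟩
  exact ⟨A, B, hAB, fun A' B' h' => hmax (A', B') h'⟩

end Graph

namespace IsSplitted

variable {V : Type*} {G : SimpleGraph V} {A B : Set V}

lemma mem_left_of_notMem_right (h : IsSplitted G A B) {x : V} (hx : x ∉ B) : x ∈ A := by
  have : x ∈ A ∪ B := h.2.2.1 ▸ Set.mem_univ x
  exact this.resolve_right hx

lemma notMem_right (h : IsSplitted G A B) {x : V} (hx : x ∈ A) : x ∉ B :=
  Set.disjoint_left.1 h.2.2.2 hx

lemma neighborSet_subset (h : IsSplitted G A B) {a : V} (ha : a ∈ A) : G.neighborSet a ⊆ B :=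
  fun _ hy => by_contra fun hyB => h.1 ha (h.mem_left_of_notMem_right hyB) (G.ne_of_adj hy) hy

lemma insert_right (h : IsSplitted G A B) {a : V} (ha : a ∈ A) (hadj : ∀ b ∈ B, G.Adj a b) :
    IsSplitted G (A \ {a}) (insert a B) := by
  refine ⟨h.1.mono Set.sdiff_subset, h.2.1.insert fun b hb _ => hadj b hb, ?_, ?_⟩
  · rw [Set.union_insert, ← Set.insert_union, Set.insert_sdiff_singleton, Set.insert_eq_of_mem ha,
      h.2.2.1]
  · exact Set.disjoint_insert_right.2 ⟨fun ha' => ha'.2 rfl, h.2.2.2.mono_left Set.sdiff_subset⟩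

variable [Finite V]

lemma deg_lt_of_forall_ncard_le (h : IsSplitted G A B)
    (hmax : ∀ A' B', IsSplitted G A' B' → B'.ncard ≤ B.ncard) {a : V} (ha : a ∈ A) :
    deg G a < B.ncard := by
  obtain ⟨b, hb, hab⟩ : ∃ b ∈ B, ¬ G.Adj a b := by
    by_contra! hadj
    have := hmax _ _ (h.insert_right ha hadj)
    rw [Set.ncard_insert_of_notMem (h.notMem_right ha)] at this
    omega
  exact Set.ncard_lt_ncard ⟨h.neighborSet_subset ha, fun hsub => hab (hsub hb)⟩

section Threshold

variable {T : Set V}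

lemma neighborSet_eq_of_mem_sdiff_of_mem_sdiff (h : IsSplitted G A B)
    (hin : ∀ x ∈ T, B.ncard ≤ deg G x + 1) (hout : ∀ x ∉ T, deg G x < B.ncard) {a z : V}
    (ha : a ∈ T \ B) (hz : z ∈ B \ T) : G.neighborSet a = B \ {z} := by
  refine neighborSet_eq_diff_singleton_of_not_adj
    (h.neighborSet_subset (h.mem_left_of_notMem_right ha.2)) hz.1 (fun haz => ?_) (hin a ha.1)
  have : a ∈ G.neighborSet z := haz.symm
  rw [h.2.1.neighborSet_eq_of_deg_lt hz.1 (hout z hz.2)] at this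
  exact ha.2 this.1

lemma subsingleton_sdiff (h : IsSplitted G A B) (hT : T.ncard = B.ncard)
    (hin : ∀ x ∈ T, B.ncard ≤ deg G x + 1) (hout : ∀ x ∉ T, deg G x < B.ncard) :
    (T \ B).Subsingleton ∧ (B \ T).Subsingleton := by
  suffices (B \ T).ncard ≤ 1 by
    rw [← Set.ncard_sdiff_comm hT] at this
    exact ⟨Set.ncard_le_one_iff_subsingleton.1 this,
      Set.ncard_le_one_iff_subsingleton.1 (Set.ncard_sdiff_comm hT ▸ this)⟩
  rcases (T \ B).eq_empty_or_nonempty with hTB | ⟨a, ha⟩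
  · rw [← Set.ncard_sdiff_comm hT, hTB, Set.ncard_empty]
    exact zero_le_one
  refine Set.ncard_le_one_iff_subsingleton.2 fun z₁ hz₁ z₂ hz₂ => by_contra fun hne => ?_
  have hz₁' : z₁ ∈ B \ {z₂} := ⟨hz₁.1, hne⟩
  rw [← h.neighborSet_eq_of_mem_sdiff_of_mem_sdiff hin hout ha hz₂,
    h.neighborSet_eq_of_mem_sdiff_of_mem_sdiff hin hout ha hz₁] at hz₁'
  exact hz₁'.2 rfl

lemma isClique_of_deg (h : IsSplitted G A B) (hT : T.ncard = B.ncard)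
    (hin : ∀ x ∈ T, B.ncard ≤ deg G x + 1) (hout : ∀ x ∉ T, deg G x < B.ncard) :
    G.IsClique T := by
  have hadj : ∀ x ∈ T \ B, ∀ y ∈ T, x ≠ y → G.Adj x y := by
    intro x hx y hy hxy
    by_cases hyB : y ∈ B
    · obtain ⟨z, hz⟩ : (B \ T).Nonempty := by
        rw [← Set.ncard_pos, ← Set.ncard_sdiff_comm hT, Set.ncard_pos]
        exact ⟨x, hx⟩
      have : y ∈ G.neighborSet x := by
        rw [h.neighborSet_eq_of_mem_sdiff_of_mem_sdiff hin hout hx hz]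
        exact ⟨hyB, fun hyz => hz.2 (hyz ▸ hy)⟩
      exact this
    · exact absurd ((h.subsingleton_sdiff hT hin hout).1 hx ⟨hy, hyB⟩) hxy
  intro x hx y hy hxy
  by_cases hxB : x ∈ B
  · by_cases hyB : y ∈ B
    · exact h.2.1 hxB hyB hxy
    · exact (hadj y ⟨hy, hyB⟩ x hx hxy.symm).symm
  · exact hadj x ⟨hx, hxB⟩ y hy hxy

lemma isIndepSet_compl_of_deg (h : IsSplitted G A B) (hT : T.ncard = B.ncard)
    (hin : ∀ x ∈ T, B.ncard ≤ deg G x + 1) (hout : ∀ x ∉ T, deg G x < B.ncard) :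
    _root_.IsIndepSet G Tᶜ := by
  have hnadj : ∀ x ∈ B \ T, ∀ y ∉ T, x ≠ y → ¬ G.Adj x y := by
    intro x hx y hy hxy hxy'
    by_cases hyB : y ∈ B
    · exact hxy ((h.subsingleton_sdiff hT hin hout).2 hx ⟨hyB, hy⟩)
    · have : y ∈ G.neighborSet x := hxy'
      rw [h.2.1.neighborSet_eq_of_deg_lt hx.1 (hout x hx.2)] at this
      exact hyB this.1
  intro x hx y hy hxy
  by_cases hxB : x ∈ B
  · exact hnadj x ⟨hxB, hx⟩ y hy hxy
  · by_cases hyB : y ∈ B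
    · exact fun hxy' => hnadj y ⟨hyB, hy⟩ x hx hxy.symm hxy'.symm
    · exact h.1 (h.mem_left_of_notMem_right hxB) (h.mem_left_of_notMem_right hyB) hxy

end Threshold

variable {n : ℕ} {d : Fin n → ℕ} {v : Fin n ≃ V}

lemma ncard_le_add_one_of_lt (h : IsSplitted G A B) (hanti : Antitone d)
    (hdeg : ∀ i, deg G (v i) = d i) {i : Fin n} (hi : (i : ℕ) < B.ncard) : B.ncard ≤ d i + 1 := by
  classical
  have := hanti.le_of_lt_card (c := B.ncard - 1) (s := {j | v j ∈ B}) (fun j hj => by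
    have := h.2.1.ncard_le_deg_add_one (mem_filter.1 hj).2
    rw [hdeg] at this
    omega) (v.card_filter_apply_mem B ▸ hi)
  omega

lemma lt_ncard_of_ncard_le (h : IsSplitted G A B)
    (hmax : ∀ A' B', IsSplitted G A' B' → B'.ncard ≤ B.ncard) (hanti : Antitone d)
    (hdeg : ∀ i, deg G (v i) = d i) {i : Fin n} (hi : B.ncard ≤ (i : ℕ)) : d i < B.ncard := by
  classical
  refine hanti.lt_of_card_le ((card_le_card fun j hj => ?_).trans (v.card_filter_apply_mem B).le) hi
  refine mem_filter.2 ⟨mem_univ j, by_contra fun hjB => ?_⟩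
  have := h.deg_lt_of_forall_ncard_le hmax (h.mem_left_of_notMem_right hjB)
  have := (mem_filter.1 hj).2
  rw [hdeg] at *
  omega

end IsSplitted

theorem stmt8_general {V : Type*} (G : SimpleGraph V) (hsplit : IsSplitGraph G)
    (n : ℕ) (d : Fin n → ℕ) (hanti : Antitone d) (v : Fin n ≃ V)
    (hdeg : ∀ i, deg G (v i) = d i) :
    G.IsClique {x : V | ∃ i : Fin n,
        (i : ℕ) <
          (Finset.univ.filter (fun j : Fin n => (j : ℕ) ≤ d j)).sup
            (fun j : Fin n => (j : ℕ) + 1) ∧ x = v i} ∧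
      _root_.IsIndepSet G {x : V | ∃ i : Fin n,
        (Finset.univ.filter (fun j : Fin n => (j : ℕ) ≤ d j)).sup
            (fun j : Fin n => (j : ℕ) + 1) ≤ (i : ℕ) ∧ x = v i} := by
  have := Finite.of_equiv _ v
  obtain ⟨A, B, hAB, hmax⟩ := hsplit.exists_isSplitted_forall_ncard_le
  have hhigh (i : Fin n) := hAB.ncard_le_add_one_of_lt hanti hdeg (i := i)
  have hlow (i : Fin n) := hAB.lt_ncard_of_ncard_le hmax hanti hdeg (i := i)
  have hkn : B.ncard ≤ n := Nat.card_eq_of_equiv_fin v.symm ▸ B.ncard_le_card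
  have hin : ∀ x ∈ v '' {i : Fin n | (i : ℕ) < B.ncard}, B.ncard ≤ deg G x + 1 := by
    rintro _ ⟨i, hi, rfl⟩
    exact hdeg i ▸ hhigh i hi
  have hout : ∀ x ∉ v '' {i : Fin n | (i : ℕ) < B.ncard}, deg G x < B.ncard := by
    intro x hx
    obtain ⟨i, rfl⟩ := v.surjective x
    exact hdeg i ▸ hlow i (not_lt.1 fun hi => hx ⟨i, hi, rfl⟩)
  have hT := v.ncard_image_setOf_val_lt hkn
  rw [sup_filter_le_eq hkn hhigh hlow, v.setOf_exists_eq_apply, v.setOf_exists_eq_apply]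
  simp_rw [← not_lt, ← Set.compl_ofPred, Set.image_compl_eq v.bijective]
  exact ⟨hAB.isClique_of_deg hT hin hout, hAB.isIndepSet_compl_of_deg hT hin hout⟩

/-- Hammer–Simeone: in a split graph with nonincreasing degree
sequence `d` and `m = m(d) = max{i : d_i ≥ i−1}`, the `m` vertices of largest
degree form a clique and the remaining vertices form an independent set. -/
theorem stmt8 {V : Type*} [Fintype V] (G : SimpleGraph V) (hsplit : IsSplitGraph G)
    (n : ℕ) (d : Fin n → ℕ) (hanti : Antitone d) (v : Fin n ≃ V)
    (hdeg : ∀ i, deg G (v i) = d i) :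
    G.IsClique {x : V | ∃ i : Fin n,
        (i : ℕ) <
          (Finset.univ.filter (fun j : Fin n => (j : ℕ) ≤ d j)).sup
            (fun j : Fin n => (j : ℕ) + 1) ∧ x = v i} ∧
      _root_.IsIndepSet G {x : V | ∃ i : Fin n,
        (Finset.univ.filter (fun j : Fin n => (j : ℕ) ≤ d j)).sup
            (fun j : Fin n => (j : ℕ) + 1) ≤ (i : ℕ) ∧ x = v i} :=
  stmt8_general G hsplit n d hanti v hdeg
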